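/- Let M = [[-M1ᵀM1 − M2, M1ᵀM3],[M1, −M3]] with M2, M3 real symmetric positive semi-definite. If (u, ū) is an eigenvector of M for a purely imaginary nonzero eigenvalue λ = iβ (β ≠ 0, real), then u = 0, M3ū = 0, and consequently ū = 0; hence M has no nonzero purely imaginary eigenvalues. -/

import Mathlib

/-!
Write `M = N * D` with `N = [[-M1ᵀM1 - M2, M1ᵀ], [M1, -1]]` symmetric and `D = diag(1, M3)`
positive semidefinite. If `M v = μ v`, then `(D v)* N (D v) = v* D N D v = μ (v* D v)`, and both
Hermitian forms are real, so `Im μ ≠ 0` forces `v* D v = 0`. Hence `D v = 0`, and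
`μ v = N (D v) = 0` gives `v = 0`.
-/

open Matrix Complex
open scoped ComplexOrder

namespace Matrix

variable {m n : Type*} [Fintype m] [Fintype n]

theorem PosSemidef.map_ofReal {A : Matrix n n ℝ} (hA : A.PosSemidef) :
    (A.map ((↑) : ℝ → ℂ)).PosSemidef := by
  classical
  open scoped MatrixOrder in
  obtain ⟨B, rfl⟩ := CStarAlgebra.nonneg_iff_eq_star_mul_self.mp hA.nonneg
  have hmap : (star B * B).map ((↑) : ℝ → ℂ) = (B.map (↑))ᴴ * B.map (↑) := by
    rw [← conjTranspose_map _ fun _ ↦ (conj_ofReal _).symm]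
    exact Matrix.map_mul (f := ofRealHom)
  rw [hmap]
  exact posSemidef_conjTranspose_mul_self _

theorem PosSemidef.fromBlocks_zero {R : Type*} [CommRing R] [PartialOrder R] [StarRing R]
    [IsOrderedAddMonoid R] {A : Matrix m m R} {D : Matrix n n R}
    (hA : A.PosSemidef) (hD : D.PosSemidef) : (fromBlocks A 0 0 D).PosSemidef := by
  refine .of_dotProduct_mulVec_nonneg (hA.isHermitian.fromBlocks (by simp) hD.isHermitian)
    fun v ↦ ?_
  have hsplit : star v ⬝ᵥ fromBlocks A 0 0 D *ᵥ v =
      star (v ∘ Sum.inl) ⬝ᵥ A *ᵥ (v ∘ Sum.inl) + star (v ∘ Sum.inr) ⬝ᵥ D *ᵥ (v ∘ Sum.inr) := by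
    rw [← Sum.elim_comp_inl_inr v, fromBlocks_mulVec]
    simp [dotProduct, Fintype.sum_sum_type]
  rw [hsplit]
  exact add_nonneg (hA.dotProduct_mulVec_nonneg _) (hD.dotProduct_mulVec_nonneg _)

theorem fromBlocks_mul_fromBlocks_one_zero_zero [DecidableEq m] [DecidableEq n]
    {α : Type*} [Ring α] (A : Matrix m m α) (B : Matrix m n α) (C : Matrix n m α)
    (D : Matrix n n α) :
    fromBlocks A B C (-1) * fromBlocks 1 0 0 D = fromBlocks A (B * D) C (-D) := by
  simp [fromBlocks_multiply]

theorem IsHermitian.eq_zero_of_mul_posSemidef_mulVec_eq_smul {𝕜 : Type*} [RCLike 𝕜]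
    {N K : Matrix n n 𝕜} (hN : N.IsHermitian) (hK : K.PosSemidef) {μ : 𝕜} {v : n → 𝕜}
    (hμ : RCLike.im μ ≠ 0) (hv : (N * K) *ᵥ v = μ • v) : v = 0 := by
  set r := star v ⬝ᵥ K *ᵥ v
  have hform : star (K *ᵥ v) ⬝ᵥ N *ᵥ (K *ᵥ v) = μ * r := by
    rw [mulVec_mulVec, hv, dotProduct_smul, star_mulVec, ← dotProduct_mulVec,
      hK.isHermitian.eq, smul_eq_mul]
  have hr_im : RCLike.im r = 0 := hK.isHermitian.im_star_dotProduct_mulVec_self v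
  have hr_re : RCLike.re r = 0 := by
    have hform_im := hN.im_star_dotProduct_mulVec_self (K *ᵥ v)
    rw [hform, RCLike.mul_im, hr_im, mul_zero, zero_add] at hform_im
    exact (mul_eq_zero.mp hform_im).resolve_left hμ
  have hKv : K *ᵥ v = 0 :=
    (hK.dotProduct_mulVec_zero_iff v).mp (RCLike.ext (by simpa using hr_re) (by simpa using hr_im))
  have hμ0 : μ ≠ 0 := fun h ↦ hμ (by simp [h])
  rw [← mulVec_mulVec, hKv, mulVec_zero, eq_comm, smul_eq_zero] at hv
  exact hv.resolve_left hμ0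

end Matrix

/-- M = [[-M1ᵀM1 − M2, M1ᵀM3],[M1, −M3]] (M2, M3 real symmetric PSD) has no
nonzero purely imaginary eigenvalues: an eigenvector (u, ū) for λ = iβ with
β ≠ 0 must satisfy u = 0, M3ū = 0 and hence ū = 0, a contradiction with being
an eigenvector. -/
theorem stmt14 (p q : ℕ)
    (M1 : Matrix (Fin p) (Fin q) ℝ)
    (M2 : Matrix (Fin q) (Fin q) ℝ) (M3 : Matrix (Fin p) (Fin p) ℝ)
    (h2 : M2.PosSemidef) (h3 : M3.PosSemidef)
    (M : Matrix (Fin q ⊕ Fin p) (Fin q ⊕ Fin p) ℝ)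
    (hM : M = Matrix.fromBlocks (-(M1ᵀ * M1) - M2) (M1ᵀ * M3) M1 (-M3))
    (β : ℝ) (hβ : β ≠ 0)
    (u : Fin q → ℂ) (ub : Fin p → ℂ)
    (heig : (M.map (Complex.ofReal)) *ᵥ Sum.elim u ub =
      (Complex.I * β) • Sum.elim u ub) :
    u = 0 ∧ (M3.map (Complex.ofReal)) *ᵥ ub = 0 ∧ ub = 0 := by
  set N := fromBlocks (-(M1ᵀ * M1) - M2) M1ᵀ M1 (-1)
  set D : Matrix (Fin q ⊕ Fin p) (Fin q ⊕ Fin p) ℝ := fromBlocks 1 0 0 M3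
  have hN : N.IsHermitian := by
    refine .fromBlocks (.sub (.neg ?_) h2.isHermitian) (by simp) (by simp)
    simpa using isHermitian_conjTranspose_mul_self M1
  have hD : D.PosSemidef := PosSemidef.one.fromBlocks_zero h3
  have hMND : M.map ofReal = N.map ofReal * D.map ofReal := by
    rw [hM, ← fromBlocks_mul_fromBlocks_one_zero_zero]
    exact Matrix.map_mul (f := ofRealHom)
  have hv : Sum.elim u ub = 0 := by
    refine (hN.map _ fun _ ↦ (conj_ofReal _).symm).eq_zero_of_mul_posSemidef_mulVec_eq_smul
      hD.map_ofReal (μ := I * β) (by simpa using hβ) ?_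
    rwa [← hMND]
  obtain ⟨rfl, rfl⟩ : u = 0 ∧ ub = 0 :=
    ⟨congrArg (· ∘ Sum.inl) hv, congrArg (· ∘ Sum.inr) hv⟩
  exact ⟨rfl, mulVec_zero _, rfl⟩
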